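/- arXiv:1508.03438 — 2 statements merged into one kernel-verified Lean document; each statement's English description precedes it below -/
import Mathlib

section
/- Let H(t,ξ) be the Zaremba Green function of the lower half-plane. For every real t₁ < 0 and every complex ξ with ξ ≠ t₁, the one-sided normal derivative of H at t = t₁ from the lower half-plane, namely lim_{h→0⁻} (H(t₁ + i h, ξ) − H(t₁, ξ))/h, exists and equals 0 (the homogeneous Neumann condition on the negative real axis). -/
/-!
On the closed lower half-plane the branch satisfies `√t = -i (-t)^{1/2}` with the principal power,
and the right-hand side is holomorphic across the negative real axis. So for `Im t ≤ 0` the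
function `t ↦ H(t, ξ)` agrees with a function of the form `Σ cₖ log |fₖ(t)|`, `fₖ` holomorphic
and nonvanishing at `t₁`, and the one-sided normal derivative is its two-sided one,
`Σ cₖ Re (i fₖ'(t₁) / fₖ(t₁))`. The two logarithmic terms cancel because
`t₁ - conj ξ = conj (t₁ - ξ)`. With `s = √(-t₁)`, the root has value `-i s` and derivative
`i / (2s)` at `t₁`, so the two root terms contribute
`(1/s) (Re (√ξ - i s)⁻¹ - Re (√(conj ξ) + i s)⁻¹)`, which vanishes because
`√(conj ξ) = conj √ξ`, or, for `ξ < 0`, both roots are purely imaginary.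
-/

open Complex Real

/-- The branch angle in [-π, π): equals `Complex.arg` except that angle π is mapped to -π. -/
noncomputable def branchAngle (w : ℂ) : ℝ :=
  if Complex.arg w = Real.pi then -Real.pi else Complex.arg w

/-- Square root branch √w = √ρ e^{iθ/2} with θ ∈ [-π, π), and √0 = 0. -/
noncomputable def zsqrt (w : ℂ) : ℂ :=
  (Real.sqrt (‖w‖) : ℂ) * Complex.exp (Complex.I * (branchAngle w / 2))

/-- The Zaremba Green function of the lower half-plane. -/
noncomputable def ZH (t ξ : ℂ) : ℝ :=
  -(1 / (2 * Real.pi)) *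
    (Real.log (‖t - ξ‖) + Real.log (‖t - (starRingEnd ℂ) ξ‖)
      - 2 * Real.log (‖zsqrt t + zsqrt ξ‖)
      - 2 * Real.log (‖zsqrt t - zsqrt ((starRingEnd ℂ) ξ)‖))

open ComplexConjugate

theorem HasDerivAt.log_norm {f : ℝ → ℂ} {f' : ℂ} {x : ℝ} (hf : HasDerivAt f f' x)
    (hx : f x ≠ 0) : HasDerivAt (fun y => Real.log ‖f y‖) (f' / f x).re x := by
  have hlog : (fun y => Real.log ‖f y‖) = fun y => Real.log (‖f y‖ ^ 2) / 2 := by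
    funext y; rw [Real.log_pow]; push_cast; ring
  rw [hlog]
  refine ((hf.norm_sq.log (by positivity)).div_const 2).congr_deriv ?_
  rw [div_re, Complex.sq_norm]
  simp only [Complex.inner, mul_re, conj_re, conj_im]
  ring

theorem HasDerivAt.log_norm_comp_vertical {g : ℂ → ℂ} {g' : ℂ} {x : ℝ}
    (hg : HasDerivAt g g' x) (hx : g x ≠ 0) :
    HasDerivAt (fun h : ℝ => Real.log ‖g (x + I * h)‖) (I * g' / g x).re 0 := by
  have hline : HasDerivAt (fun h : ℝ => (x : ℂ) + I * h) I 0 := by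
    simpa using ((hasDerivAt_id (0 : ℝ)).ofReal_comp.const_mul I).const_add (x : ℂ)
  simpa [mul_comm] using (hg.comp_of_eq 0 hline (by simp)).log_norm (by simpa using hx)

lemma re_I_div_add_re_I_div_conj (a : ℂ) : (I / a).re + (I / conj a).re = 0 := by
  simp [div_re, neg_div]

lemma ofReal_cpow_one_half {x : ℝ} (hx : 0 ≤ x) : (x : ℂ) ^ (1 / 2 : ℂ) = √x := by
  rw [Real.sqrt_eq_rpow, ofReal_cpow hx]
  push_cast; rfl

lemma zsqrt_sq (w : ℂ) : zsqrt w ^ 2 = w := by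
  have hexp : exp (I * (branchAngle w / 2)) ^ 2 = exp (arg w * I) := by
    rw [← Complex.exp_nat_mul, branchAngle]
    split_ifs with h
    · rw [h]; push_cast
      rw [show (2 : ℂ) * (I * (-π / 2)) = π * I - 2 * π * I by ring, Complex.exp_sub,
        exp_two_pi_mul_I]
      simp
    · ring_nf
  rw [zsqrt, mul_pow, ← ofReal_pow, Real.sq_sqrt (norm_nonneg w), hexp,
    norm_mul_exp_arg_mul_I]

lemma zsqrt_conj {w : ℂ} (h : arg w ≠ π) : zsqrt (conj w) = conj (zsqrt w) := by
  have hneg : -arg w ≠ π := fun h' => by linarith [neg_pi_lt_arg w]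
  have hangle : branchAngle (conj w) = -branchAngle w := by
    simp [branchAngle, arg_conj, h, hneg]
  rw [zsqrt, zsqrt, hangle, map_mul, norm_conj, conj_ofReal, ← exp_conj]
  simp only [map_mul, conj_I, map_div₀, conj_ofReal, map_ofNat]
  push_cast; ring_nf

lemma zsqrt_re_of_arg_eq_pi {w : ℂ} (h : arg w = π) : (zsqrt w).re = 0 := by
  simp [zsqrt, branchAngle, h, exp_re, neg_div]

lemma re_inv_zsqrt_sub_I_mul_eq_re_inv_zsqrt_conj_add (ξ : ℂ) (s : ℝ) :
    (zsqrt ξ - I * s)⁻¹.re = (zsqrt (conj ξ) + I * s)⁻¹.re := by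
  by_cases h : arg ξ = π
  · have hreal : conj ξ = ξ := conj_eq_iff_im.mpr (arg_eq_pi_iff.mp h).2
    simp [inv_re, hreal, zsqrt_re_of_arg_eq_pi h]
  · rw [zsqrt_conj h, show conj (zsqrt ξ) + I * s = conj (zsqrt ξ - I * s) by simp,
      ← map_inv₀, conj_re]

lemma arg_neg_eq_branchAngle_add_pi {w : ℂ} (hw : w.im ≤ 0) (hw0 : w ≠ 0) :
    arg (-w) = branchAngle w + π := by
  rw [branchAngle]
  split_ifs with h
  · obtain ⟨hre, him⟩ := arg_eq_pi_iff.mp h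
    rw [show -w = ((-w.re : ℝ) : ℂ) from Complex.ext (by simp) (by simp [him]),
      arg_ofReal_of_nonneg (by linarith)]
    ring
  · refine arg_neg_eq_arg_add_pi_iff.mpr ?_
    rcases hw.lt_or_eq with him | him
    · exact .inl him
    · refine .inr ⟨him, ?_⟩
      rcases lt_trichotomy w.re 0 with hre | hre | hre
      · exact absurd (arg_eq_pi_iff.mpr ⟨hre, him⟩) h
      · exact absurd (Complex.ext hre him) hw0
      · exact hre

/-- Holomorphic off `[0, ∞)`, and equal to `zsqrt` on the closed lower half-plane. -/
noncomputable def zsqrtLower (w : ℂ) : ℂ := -I * (-w) ^ (1 / 2 : ℂ)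

lemma zsqrt_eq_zsqrtLower {w : ℂ} (hw : w.im ≤ 0) : zsqrt w = zsqrtLower w := by
  rcases eq_or_ne w 0 with rfl | hw0
  · simp [zsqrt, zsqrtLower]
  have hlog : log (-w) * (1 / 2) = ↑(Real.log ‖w‖ * (1 / 2)) + I * (branchAngle w / 2)
      + π / 2 * I := by
    rw [Complex.log, norm_neg, arg_neg_eq_branchAngle_add_pi hw hw0]; push_cast; ring
  rw [zsqrtLower, cpow_def_of_ne_zero (neg_ne_zero.mpr hw0), hlog, Complex.exp_add,
    Complex.exp_add, exp_pi_div_two_mul_I, ← ofReal_exp,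
    ← Real.rpow_def_of_pos (norm_pos_iff.mpr hw0), ← Real.sqrt_eq_rpow, zsqrt]
  ring_nf; rw [I_sq]; ring

lemma zsqrtLower_ofReal_of_nonpos {x : ℝ} (hx : x ≤ 0) : zsqrtLower x = -I * √(-x) := by
  rw [zsqrtLower, ← ofReal_neg, ofReal_cpow_one_half (by linarith)]

lemma hasDerivAt_zsqrtLower_ofReal_of_neg {x : ℝ} (hx : x < 0) :
    HasDerivAt zsqrtLower (I / (2 * √(-x))) x := by
  have hslit : -(x : ℂ) ∈ slitPlane := by
    rw [← ofReal_neg]; exact ofReal_mem_slitPlane.mpr (by linarith)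
  have hs : (√(-x) : ℂ) ≠ 0 := ofReal_ne_zero.mpr (Real.sqrt_pos.mpr (by linarith)).ne'
  have hsq : -(x : ℂ) = (√(-x) : ℂ) ^ 2 := by
    rw [← ofReal_pow, Real.sq_sqrt (by linarith)]; push_cast; ring
  have hpow : (-(x : ℂ)) ^ (1 / 2 - 1 : ℂ) = (√(-x) : ℂ)⁻¹ := by
    rw [cpow_sub _ _ (neg_ne_zero.mpr (ofReal_ne_zero.mpr hx.ne)), cpow_one, ← ofReal_neg,
      ofReal_cpow_one_half (by linarith), ofReal_neg, hsq]
    field_simp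
  refine (((hasDerivAt_id (x : ℂ)).neg.cpow_const hslit).const_mul (-I)).congr_deriv ?_
  simp only [Pi.neg_apply, id_eq, hpow]
  field_simp

noncomputable def ZHLower (t ξ : ℂ) : ℝ :=
  -(1 / (2 * π)) * (Real.log ‖t - ξ‖ + Real.log ‖t - conj ξ‖
    - 2 * Real.log ‖zsqrtLower t + zsqrt ξ‖ - 2 * Real.log ‖zsqrtLower t - zsqrt (conj ξ)‖)

lemma ZH_eq_ZHLower {t : ℂ} (ht : t.im ≤ 0) (ξ : ℂ) : ZH t ξ = ZHLower t ξ := by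
  rw [ZH, ZHLower, zsqrt_eq_zsqrtLower ht]

lemma hasDerivAt_ZHLower_vertical {t₁ : ℝ} (ht : t₁ < 0) {ξ : ℂ} (hξ : ξ ≠ t₁) :
    HasDerivAt (fun h : ℝ => ZHLower (t₁ + I * h) ξ) 0 0 := by
  have hS := hasDerivAt_zsqrtLower_ofReal_of_neg ht
  have hS₀ := zsqrtLower_ofReal_of_nonpos ht.le
  set s := √(-t₁)
  have hsq : (I * s) ^ 2 = t₁ := by
    rw [mul_pow, I_sq, ← ofReal_pow, Real.sq_sqrt (by linarith)]; push_cast; ring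
  have h₁ : (t₁ : ℂ) - ξ ≠ 0 := sub_ne_zero.mpr hξ.symm
  have h₂ : (t₁ : ℂ) - conj ξ ≠ 0 := by
    rw [← conj_ofReal, ← map_sub]; exact (map_ne_zero _).mpr h₁
  have h₃ : zsqrtLower t₁ + zsqrt ξ ≠ 0 := fun h => hξ <| by
    rw [← zsqrt_sq ξ, ← hsq]; congr 1; linear_combination h - hS₀
  have h₄ : zsqrtLower t₁ - zsqrt (conj ξ) ≠ 0 := fun h => hξ <| by
    have : conj ξ = t₁ := by
      rw [← zsqrt_sq (conj ξ), ← hsq, show zsqrt (conj ξ) = -I * s by linear_combination hS₀ - h]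
      ring
    simpa using congrArg conj this
  have d₁ := ((hasDerivAt_id (t₁ : ℂ)).sub_const ξ).log_norm_comp_vertical h₁
  have d₂ := ((hasDerivAt_id (t₁ : ℂ)).sub_const (conj ξ)).log_norm_comp_vertical h₂
  have d₃ := (hS.add_const (zsqrt ξ)).log_norm_comp_vertical h₃
  have d₄ := (hS.sub_const (zsqrt (conj ξ))).log_norm_comp_vertical h₄
  refine ((((d₁.add d₂).sub (d₃.const_mul 2)).sub (d₄.const_mul 2)).const_mul
    (-(1 / (2 * π)))).congr_deriv ?_
  have hlin := re_I_div_add_re_I_div_conj ((t₁ : ℂ) - ξ)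
  rw [map_sub, conj_ofReal] at hlin
  have hII : I * (I / (2 * s)) = ((-1 / (2 * s) : ℝ) : ℂ) := by
    push_cast; rw [← mul_div_assoc, I_mul_I]
  rw [hS₀, hII, show -I * s + zsqrt ξ = zsqrt ξ - I * s by ring,
    show -I * s - zsqrt (conj ξ) = -(zsqrt (conj ξ) + I * s) by ring, div_neg, neg_re]
  simp only [id, mul_one, div_eq_mul_inv, re_ofReal_mul] at hlin ⊢
  rw [re_inv_zsqrt_sub_I_mul_eq_re_inv_zsqrt_conj_add ξ s]
  linear_combination (-(2 * π)⁻¹) * hlin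

/-- For every real t₁ < 0 and complex ξ ≠ t₁, the one-sided normal derivative
of H at t = t₁ from the lower half-plane exists and equals 0 (homogeneous Neumann condition
on the negative real axis). -/
theorem zaremba_green_neumann (t₁ : ℝ) (ht : t₁ < 0) (ξ : ℂ) (hξ : ξ ≠ (t₁ : ℂ)) :
    Filter.Tendsto
      (fun h : ℝ => (ZH ((t₁ : ℂ) + Complex.I * h) ξ - ZH (t₁ : ℂ) ξ) / h)
      (nhdsWithin 0 (Set.Iio 0)) (nhds 0) := by
  refine (hasDerivAt_ZHLower_vertical ht hξ).tendsto_slope_zero_left.congr'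
    (eventually_nhdsWithin_of_forall fun h (hh : h < 0) => ?_)
  have hon : ZH (t₁ + I * h) ξ = ZHLower (t₁ + I * h) ξ :=
    ZH_eq_ZHLower (by simpa using hh.le) ξ
  have hoff : ZH t₁ ξ = ZHLower t₁ ξ := ZH_eq_ZHLower (by simp) ξ
  simp only [zero_add, smul_eq_mul, ofReal_zero, mul_zero, add_zero, hon, hoff]
  ring
end

section
/- Let H(t,ξ) be the Zaremba Green function of the lower half-plane and fix a nonzero complex ξ with Im ξ ≤ 0. Then H(t,ξ) = O(|t|^{1/2}) as t → 0 within the closed lower half-plane; i.e., there exist constants C > 0 and r > 0 such that |H(t,ξ)| ≤ C |t|^{1/2} for all t ≠ 0 with Im t ≤ 0 and |t| < r. -/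
/-!
As `t → 0`, the distances `|t - ξ|` and `|t - ξ̄|` tend to `|ξ|` with error at most `|t|`, and
`|√t + √ξ|`, `|√t - √ξ̄|` tend to `√|ξ|` with error at most `|√t| = |t|^{1/2}`; the branch of the
square root enters only through `|√w| = √|w|`. Since `log` is Lipschitz near a positive point,
each logarithm in `H(t, ξ)` is within `O(|t|^{1/2})` of its limit, and the limits cancel because
`2 log |ξ| = 4 log √|ξ|`.
-/

open Complex Real

open ComplexConjugate

theorem Real.abs_log_sub_log_le_of_abs_sub_le {x b : ℝ} (hb : 0 < b) (h : |x - b| ≤ b / 2) :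
    |log x - log b| ≤ 2 * |x - b| / b := by
  have hx : b / 2 ≤ x := by linarith [neg_abs_le (x - b)]
  have hx0 : 0 < x := by linarith
  rw [← log_div hx0.ne' hb.ne', abs_le]
  constructor
  · calc -(2 * |x - b| / b) = -(|x - b| / (b / 2)) := by field_simp
      _ ≤ -(|x - b| / x) := by gcongr
      _ ≤ -((b - x) / x) := by gcongr; rw [abs_sub_comm]; exact le_abs_self _
      _ = 1 - (x / b)⁻¹ := by field_simp; ring
      _ ≤ log (x / b) := one_sub_inv_le_log_of_pos (div_pos hx0 hb)
  · calc log (x / b) ≤ x / b - 1 := log_le_sub_one_of_pos (div_pos hx0 hb)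
      _ = (x - b) / b := by field_simp
      _ ≤ 2 * |x - b| / b := by gcongr; linarith [le_abs_self (x - b), abs_nonneg (x - b)]

theorem abs_log_norm_add_sub_log_norm_le {E : Type*} [SeminormedAddCommGroup E] {z w : E}
    (h : 2 * ‖z‖ ≤ ‖w‖) : |Real.log ‖z + w‖ - Real.log ‖w‖| ≤ 2 * ‖z‖ / ‖w‖ := by
  rcases (norm_nonneg w).eq_or_lt with hw | hw
  · have hz : ‖z‖ = 0 := by linarith [norm_nonneg z]
    have hzw : ‖z + w‖ = 0 := le_antisymm (by linarith [norm_add_le z w]) (norm_nonneg _)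
    simp [hzw, ← hw]
  · have hd : |‖z + w‖ - ‖w‖| ≤ ‖z‖ := by simpa using abs_norm_sub_norm_le (z + w) w
    calc |Real.log ‖z + w‖ - Real.log ‖w‖| ≤ 2 * |‖z + w‖ - ‖w‖| / ‖w‖ :=
          Real.abs_log_sub_log_le_of_abs_sub_le hw (by linarith [abs_nonneg (‖z + w‖ - ‖w‖)])
      _ ≤ 2 * ‖z‖ / ‖w‖ := by gcongr

theorem norm_zsqrt (w : ℂ) : ‖zsqrt w‖ = √‖w‖ := by
  simp [zsqrt, Complex.norm_exp]

theorem ZH_eq_sum_log_deviations (t ξ : ℂ) :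
    ZH t ξ = -(1 / (2 * π)) *
      ((Real.log ‖t + -ξ‖ - Real.log ‖ξ‖) + (Real.log ‖t + -conj ξ‖ - Real.log ‖ξ‖)
        - 2 * (Real.log ‖zsqrt t + zsqrt ξ‖ - Real.log √‖ξ‖)
        - 2 * (Real.log ‖zsqrt t + -zsqrt (conj ξ)‖ - Real.log √‖ξ‖)) := by
  simp only [ZH, Real.log_sqrt (norm_nonneg ξ), ← sub_eq_add_neg]
  ring

theorem abs_ZH_le_of_four_mul_norm_le {t ξ : ℂ} (hξ : ξ ≠ 0) (ht : 4 * ‖t‖ ≤ ‖ξ‖) :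
    |ZH t ξ| ≤ 5 / (π * √‖ξ‖) * √‖t‖ := by
  have hs : 0 < √‖ξ‖ := Real.sqrt_pos.mpr (norm_pos_iff.mpr hξ)
  have hroot_le : 2 * √‖t‖ ≤ √‖ξ‖ := by
    simpa [Real.sqrt_mul', show √(4 : ℝ) = 2 by norm_num] using Real.sqrt_le_sqrt ht
  have hratio : 2 * ‖t‖ / ‖ξ‖ ≤ √‖t‖ / √‖ξ‖ :=
    calc 2 * ‖t‖ / ‖ξ‖ = (2 * √‖t‖ / √‖ξ‖) * (√‖t‖ / √‖ξ‖) := by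
          rw [div_mul_div_comm, mul_assoc, Real.mul_self_sqrt (norm_nonneg _),
            Real.mul_self_sqrt (norm_nonneg _)]
      _ ≤ 1 * (√‖t‖ / √‖ξ‖) := by gcongr; rwa [div_le_one hs]
      _ = √‖t‖ / √‖ξ‖ := one_mul _
  have h2t : 2 * ‖t‖ ≤ ‖ξ‖ := by linarith [norm_nonneg t]
  have hdist : |Real.log ‖t + -ξ‖ - Real.log ‖ξ‖| ≤ 2 * ‖t‖ / ‖ξ‖ := by
    simpa using abs_log_norm_add_sub_log_norm_le (z := t) (w := -ξ) (by simpa using h2t)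
  have hdist_conj : |Real.log ‖t + -conj ξ‖ - Real.log ‖ξ‖| ≤ 2 * ‖t‖ / ‖ξ‖ := by
    simpa using abs_log_norm_add_sub_log_norm_le (z := t) (w := -conj ξ) (by simpa using h2t)
  have hroot : |Real.log ‖zsqrt t + zsqrt ξ‖ - Real.log √‖ξ‖| ≤ 2 * (√‖t‖ / √‖ξ‖) := by
    simpa [norm_zsqrt, mul_div_assoc] using abs_log_norm_add_sub_log_norm_le (z := zsqrt t)
      (w := zsqrt ξ) (by simpa [norm_zsqrt] using hroot_le)
  have hroot_conj : |Real.log ‖zsqrt t + -zsqrt (conj ξ)‖ - Real.log √‖ξ‖| ≤ 2 * (√‖t‖ / √‖ξ‖) := by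
    simpa [norm_zsqrt, mul_div_assoc] using abs_log_norm_add_sub_log_norm_le (z := zsqrt t)
      (w := -zsqrt (conj ξ)) (by simpa [norm_zsqrt] using hroot_le)
  rw [ZH_eq_sum_log_deviations, abs_mul, abs_neg, abs_of_pos (by positivity)]
  calc 1 / (2 * π) * |_| ≤ 1 / (2 * π) * (10 * (√‖t‖ / √‖ξ‖)) := by
        gcongr
        rw [abs_le] at hdist hdist_conj hroot hroot_conj
        exact abs_le.mpr ⟨by linarith [hdist.1, hdist_conj.1, hroot.2, hroot_conj.2],
          by linarith [hdist.2, hdist_conj.2, hroot.1, hroot_conj.1]⟩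
    _ = 5 / (π * √‖ξ‖) * √‖t‖ := by field_simp; ring

theorem zaremba_green_sqrt_bound_near_zero_general (ξ : ℂ) (hξ0 : ξ ≠ 0) :
    ∃ C > (0:ℝ), ∃ r > (0:ℝ), ∀ t : ℂ, t ≠ 0 → t.im ≤ 0 → ‖t‖ < r →
      |ZH t ξ| ≤ C * Real.sqrt (‖t‖) := by
  have hξ : 0 < ‖ξ‖ := norm_pos_iff.mpr hξ0
  exact ⟨5 / (π * √‖ξ‖), by positivity, ‖ξ‖ / 4, by positivity,
    fun t _ _ ht => abs_ZH_le_of_four_mul_norm_le hξ0 (by linarith)⟩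

/-- For fixed nonzero ξ with Im ξ ≤ 0, one has H(t,ξ) = O(|t|^{1/2}) as t → 0
within the closed lower half-plane. -/
theorem zaremba_green_sqrt_bound_near_zero (ξ : ℂ) (hξ0 : ξ ≠ 0) (hξ : ξ.im ≤ 0) :
    ∃ C > (0:ℝ), ∃ r > (0:ℝ), ∀ t : ℂ, t ≠ 0 → t.im ≤ 0 → ‖t‖ < r →
      |ZH t ξ| ≤ C * Real.sqrt (‖t‖) :=
  zaremba_green_sqrt_bound_near_zero_general ξ hξ0
end
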